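/- Let f : (ZMod 2)^n → ℝ be a Boolean function (f(x) ∈ {−1,1} for all x) with spectral norm ‖f̂‖₁ = A. Let α ∈ (ZMod 2)^n be such that |f̂(α)| is maximal over all Fourier coefficients, and let β ≠ α be such that |f̂(β)| is maximal over all γ ≠ α. Then |f̂(α)| ≥ 1/A and |f̂(β)| ≥ (1 − f̂(α)²)/A. -/

import Mathlib

/-!
Orthogonality of the characters gives Parseval's identity `∑ f̂(γ)² = 2⁻ⁿ ∑ f(x)²`, which is
`1` for a Boolean function. Bounding each square `f̂(γ)²` by `|f̂(α)| |f̂(γ)|` gives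
`1 ≤ |f̂(α)| A`; dropping `γ = α` first and bounding by `|f̂(β)| |f̂(γ)|` instead gives
`1 - f̂(α)² ≤ |f̂(β)| ∑_{γ ≠ α} |f̂(γ)| ≤ |f̂(β)| A`.
-/

/-- The character `χ_α(x) = (-1)^{⟨α,x⟩}` on the Boolean cube `(ZMod 2)^n`. -/
noncomputable def chi {n : ℕ} (α x : Fin n → ZMod 2) : ℝ :=
  if (∑ i, α i * x i : ZMod 2) = 0 then 1 else -1

/-- The Fourier coefficient `f̂(α) = 2^{-n} ∑_x f(x) χ_α(x)`. -/
noncomputable def fhat {n : ℕ} (f : (Fin n → ZMod 2) → ℝ) (α : Fin n → ZMod 2) : ℝ :=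
  (2 ^ n : ℝ)⁻¹ * ∑ x : Fin n → ZMod 2, f x * chi α x

open Finset Matrix

noncomputable def signChar : AddChar (ZMod 2) ℝ :=
  AddChar.zmodChar 2 (by norm_num : (-1 : ℝ) ^ 2 = 1)

lemma zmod_two_eq_zero_or_eq_one (c : ZMod 2) : c = 0 ∨ c = 1 := by
  revert c; decide

lemma signChar_apply (c : ZMod 2) : signChar c = if c = 0 then 1 else -1 := by
  rcases zmod_two_eq_zero_or_eq_one c with rfl | rfl
  · simp
  · simp [signChar, AddChar.zmodChar_apply, ZMod.val_one]

section Characters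

variable {n : ℕ}

lemma chi_eq_signChar (γ x : Fin n → ZMod 2) : chi γ x = signChar (γ ⬝ᵥ x) := by
  rw [chi, signChar_apply, dotProduct]

lemma chi_mul_chi (γ x y : Fin n → ZMod 2) : chi γ x * chi γ y = chi γ (x - y) := by
  simp only [chi_eq_signChar, dotProduct_sub, CharTwo.sub_eq_add, AddChar.map_add_eq_mul]

lemma chi_zero_right (γ : Fin n → ZMod 2) : chi γ 0 = 1 := by
  simp [chi_eq_signChar]

lemma sum_chi_eq_zero {z : Fin n → ZMod 2} (hz : z ≠ 0) : ∑ γ, chi γ z = 0 := by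
  let ψ : AddChar (Fin n → ZMod 2) ℝ :=
    signChar.compAddMonoidHom (.mk' (· ⬝ᵥ z) fun a b ↦ add_dotProduct a b z)
  obtain ⟨i, hi⟩ := Function.ne_iff.1 hz
  have hzi : z i = 1 := (zmod_two_eq_zero_or_eq_one (z i)).resolve_left hi
  have hψ : ψ ≠ 0 := AddChar.ne_zero_iff.2
    ⟨Pi.single i 1, by norm_num [ψ, single_dotProduct, hzi, signChar_apply]⟩
  simpa [ψ, chi_eq_signChar] using AddChar.sum_eq_zero_iff_ne_zero.2 hψ

lemma sum_chi_mul_chi (x y : Fin n → ZMod 2) :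
    ∑ γ, chi γ x * chi γ y = if x = y then 2 ^ n else 0 := by
  simp_rw [chi_mul_chi]
  split_ifs with h
  · simp [h, chi_zero_right]
  · exact sum_chi_eq_zero (sub_ne_zero.2 h)

theorem sum_fhat_sq (f : (Fin n → ZMod 2) → ℝ) :
    ∑ γ, fhat f γ ^ 2 = (2 ^ n)⁻¹ * ∑ x, f x ^ 2 := by
  have expand (γ : Fin n → ZMod 2) : fhat f γ ^ 2 =
      ((2 : ℝ) ^ n)⁻¹ ^ 2 * ∑ x, ∑ y, f x * f y * (chi γ x * chi γ y) := by
    rw [fhat, mul_pow, sq (∑ x, _), sum_mul_sum]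
    simp only [mul_mul_mul_comm]
  calc ∑ γ, fhat f γ ^ 2
      = ((2 : ℝ) ^ n)⁻¹ ^ 2 * ∑ x, ∑ y, f x * f y * ∑ γ, chi γ x * chi γ y := by
        rw [sum_congr rfl fun γ _ ↦ expand γ, ← mul_sum, sum_comm]
        refine congrArg _ (sum_congr rfl fun x _ ↦ ?_)
        rw [sum_comm]
        simp only [mul_sum]
    _ = (2 ^ n)⁻¹ * ∑ x, f x ^ 2 := by
        simp only [sum_chi_mul_chi, mul_ite, mul_zero, sum_ite_eq, mem_univ, if_true, ← sum_mul]
        field_simp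

theorem sum_fhat_sq_eq_one {f : (Fin n → ZMod 2) → ℝ} (hf : ∀ x, f x = 1 ∨ f x = -1) :
    ∑ γ, fhat f γ ^ 2 = 1 := by
  have hf2 (x : Fin n → ZMod 2) : f x ^ 2 = 1 := by rcases hf x with h | h <;> simp [h]
  simp [sum_fhat_sq, hf2]

end Characters

lemma Finset.sum_sq_le_mul_sum_abs {ι R : Type*} [Ring R] [LinearOrder R] [IsStrictOrderedRing R]
    (s : Finset ι) {a : ι → R} {M : R}
    (h : ∀ i ∈ s, |a i| ≤ M) : ∑ i ∈ s, a i ^ 2 ≤ M * ∑ i ∈ s, |a i| := by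
  rw [mul_sum]
  refine sum_le_sum fun i hi ↦ ?_
  rw [← sq_abs, sq]
  exact mul_le_mul_of_nonneg_right (h i hi) (abs_nonneg _)

theorem largest_coeff_general {n : ℕ}
    (f : (Fin n → ZMod 2) → ℝ) (hf : ∀ x, f x = 1 ∨ f x = -1)
    (A : ℝ) (hA : ∑ γ : Fin n → ZMod 2, |fhat f γ| = A)
    (α β : Fin n → ZMod 2)
    (hα : ∀ γ, |fhat f γ| ≤ |fhat f α|)
    (hβ : ∀ γ, γ ≠ α → |fhat f γ| ≤ |fhat f β|) :
    1 / A ≤ |fhat f α| ∧ (1 - (fhat f α) ^ 2) / A ≤ |fhat f β| := by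
  have parseval := sum_fhat_sq_eq_one hf
  have hαA : 1 ≤ |fhat f α| * A := by
    rw [← parseval, ← hA]
    exact sum_sq_le_mul_sum_abs _ fun γ _ ↦ hα γ
  have hA_pos : 0 < A := pos_of_mul_pos_right (one_pos.trans_le hαA) (abs_nonneg _)
  have hβA : 1 - fhat f α ^ 2 ≤ |fhat f β| * A :=
    calc 1 - fhat f α ^ 2 = ∑ γ ∈ univ.erase α, fhat f γ ^ 2 := by
          rw [sum_erase_eq_sub (mem_univ α), parseval]
      _ ≤ |fhat f β| * ∑ γ ∈ univ.erase α, |fhat f γ| :=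
          sum_sq_le_mul_sum_abs _ fun γ hγ ↦ hβ γ (ne_of_mem_erase hγ)
      _ ≤ |fhat f β| * A := by
          rw [← hA]
          gcongr
          exact erase_subset α univ
  constructor <;> rw [div_le_iff₀ hA_pos] <;> linarith

/-- **Lemma 3.3**: a Boolean function with spectral norm `A` has largest Fourier
coefficient at least `1/A` in absolute value, and second largest at least
`(1 - f̂(α)²)/A`. -/
theorem largest_coeff {n : ℕ}
    (f : (Fin n → ZMod 2) → ℝ) (hf : ∀ x, f x = 1 ∨ f x = -1)
    (A : ℝ) (hA : ∑ γ : Fin n → ZMod 2, |fhat f γ| = A)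
    (α β : Fin n → ZMod 2)
    (hα : ∀ γ, |fhat f γ| ≤ |fhat f α|)
    (hβα : β ≠ α)
    (hβ : ∀ γ, γ ≠ α → |fhat f γ| ≤ |fhat f β|) :
    1 / A ≤ |fhat f α| ∧ (1 - (fhat f α) ^ 2) / A ≤ |fhat f β| :=
  largest_coeff_general f hf A hA α β hα hβ
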